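/- Equality of the two forms of the continuous homotopy integrand: for every f ∈ R = MvPolynomial ℕ ℝ of order at most M, Σ_{i=0}^{M−1} D_x^i ( X₀ · L⁽ⁱ⁺¹⁾ f ) = Σ_{i=0}^{M−1} Xᵢ · Σ_{k=i+1}^{M} (−D_x)^{k−i−1} (∂f/∂X_k). -/

import Mathlib

open MvPolynomial

/-- The total derivative operator `D_x f = Σᵢ X_{i+1} · ∂f/∂Xᵢ` on
`R = ℝ[X₀, X₁, X₂, …]`, where `Xᵢ` represents the `i`-th derivative `u_{ix}`. -/
noncomputable def Dx (f : MvPolynomial ℕ ℝ) : MvPolynomial ℕ ℝ :=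
  ∑ i ∈ f.vars, X (i + 1) * pderiv i f

/-- The continuous higher Euler operators
`L⁽ⁱ⁾ f = Σ_{k=i}^{M} C(k,i) · (−D_x)^{k−i} (∂f/∂X_k)`
for `f` of order at most `M`. -/
noncomputable def higherEuler (M i : ℕ) (f : MvPolynomial ℕ ℝ) : MvPolynomial ℕ ℝ :=
  ∑ k ∈ Finset.Icc i M, (k.choose i : ℝ) • ((fun g => -Dx g)^[k - i]) (pderiv k f)

noncomputable def DD : Derivation ℝ (MvPolynomial ℕ ℝ) (MvPolynomial ℕ ℝ) :=
  mkDerivation ℝ (fun i => X (i + 1))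

lemma Dx_eq_sum {f : MvPolynomial ℕ ℝ} {s : Finset ℕ} (h : f.vars ⊆ s) :
    Dx f = ∑ i ∈ s, X (i + 1) * pderiv i f := by
  rw [Dx]
  refine Finset.sum_subset h fun i _ hi => ?_
  rw [pderiv_eq_zero_of_notMem_vars hi, mul_zero]

lemma Dx_add (p q : MvPolynomial ℕ ℝ) : Dx (p + q) = Dx p + Dx q := by
  set s := p.vars ∪ q.vars ∪ (p + q).vars with hs
  have h1 : p.vars ⊆ s := Finset.subset_union_left.trans Finset.subset_union_left
  have h2 : q.vars ⊆ s := Finset.subset_union_right.trans Finset.subset_union_left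
  have h3 : (p + q).vars ⊆ s := Finset.subset_union_right
  rw [Dx_eq_sum h1, Dx_eq_sum h2, Dx_eq_sum h3, ← Finset.sum_add_distrib]
  simp [mul_add]

lemma Dx_mul (p q : MvPolynomial ℕ ℝ) : Dx (p * q) = Dx p * q + p * Dx q := by
  set s := p.vars ∪ q.vars ∪ (p * q).vars with hs
  have h1 : p.vars ⊆ s := Finset.subset_union_left.trans Finset.subset_union_left
  have h2 : q.vars ⊆ s := Finset.subset_union_right.trans Finset.subset_union_left
  have h3 : (p * q).vars ⊆ s := Finset.subset_union_right
  rw [Dx_eq_sum h1, Dx_eq_sum h2, Dx_eq_sum h3, Finset.sum_mul, Finset.mul_sum,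
    ← Finset.sum_add_distrib]
  refine Finset.sum_congr rfl fun i _ => ?_
  rw [pderiv_mul]
  ring

lemma Dx_X (n : ℕ) : Dx (X n) = X (n + 1) := by
  rw [Dx_eq_sum (s := {n}) (vars_X (R := ℝ)).le]
  simp

lemma Dx_C (a : ℝ) : Dx (C a) = 0 := by
  rw [Dx, vars_C, Finset.sum_empty]

lemma Dx_eq_DD (f : MvPolynomial ℕ ℝ) : Dx f = DD f := by
  induction f using MvPolynomial.induction_on with
  | C a => rw [Dx_C, DD]; simp
  | add p q hp hq => rw [Dx_add, map_add, hp, hq]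
  | mul_X p n hp =>
      rw [Dx_mul, Dx_X, hp, Derivation.leibniz, smul_eq_mul, smul_eq_mul, DD,
        mkDerivation_X]
      ring

noncomputable def E : Module.End ℝ (MvPolynomial ℕ ℝ) := DD.toLinearMap

lemma Dx_iter (n : ℕ) (g : MvPolynomial ℕ ℝ) : (Dx^[n]) g = (E ^ n) g := by
  rw [Module.End.pow_apply]
  induction n generalizing g with
  | zero => rfl
  | succ n ih => rw [Function.iterate_succ_apply, Function.iterate_succ_apply, ih, Dx_eq_DD]; rfl

lemma E_eq (x : MvPolynomial ℕ ℝ) : E x = DD x := rfl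

lemma negDx_iter (n : ℕ) (g : MvPolynomial ℕ ℝ) :
    ((fun g => -Dx g)^[n]) g = ((-1 : ℝ) ^ n) • (E ^ n) g := by
  induction n generalizing g with
  | zero => simp
  | succ n ih =>
      rw [Function.iterate_succ_apply', ih]
      show -(Dx _) = _
      rw [Dx_eq_DD, ← E_eq, map_smul, pow_succ (-1 : ℝ), pow_succ' E, mul_smul,
        Module.End.mul_apply, neg_one_smul]
      rw [smul_neg]

lemma E_X_mul (j : ℕ) (B : MvPolynomial ℕ ℝ) :
    E (X j * B) = X (j + 1) * B + X j * E B := by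
  rw [E_eq, Derivation.leibniz, smul_eq_mul, smul_eq_mul,
    show DD (X j) = X (j + 1) by unfold DD; exact mkDerivation_X (R := ℝ) _ _, ← E_eq]
  ring

lemma E_pow_X0_mul (n : ℕ) (A : MvPolynomial ℕ ℝ) :
    (E ^ n) (X 0 * A)
      = ∑ j ∈ Finset.range (n + 1), (n.choose j : ℝ) • (X j * (E ^ (n - j)) A) := by
  induction n generalizing A with
  | zero => simp
  | succ n ih =>
    rw [pow_succ' E, Module.End.mul_apply, ih, map_sum]
    have step : ∀ j ∈ Finset.range (n + 1),
        E ((n.choose j : ℝ) • (X j * (E ^ (n - j)) A))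
          = (n.choose j : ℝ) • (X (j + 1) * (E ^ (n - j)) A)
            + (n.choose j : ℝ) • (X j * (E ^ (n + 1 - j)) A) := by
      intro j hj
      have hjn : j ≤ n := Nat.lt_succ_iff.mp (Finset.mem_range.mp hj)
      have hje : n - j + 1 = n + 1 - j := by omega
      rw [map_smul, E_X_mul, smul_add, ← Module.End.mul_apply, ← pow_succ', hje]
    rw [Finset.sum_congr rfl step, Finset.sum_add_distrib]
    set T : ℕ → MvPolynomial ℕ ℝ := fun j => X j * (E ^ (n + 1 - j)) A with hT
    have h1 : ∀ j, X (j + 1) * (E ^ (n - j)) A = T (j + 1) := by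
      intro j; rw [hT]; simp
    simp only [h1]
    rw [Finset.sum_range_succ' (fun j => ((n + 1).choose j : ℝ) • T j) (n + 1)]
    simp only [Nat.choose_succ_succ', Nat.cast_add, add_smul, Finset.sum_add_distrib,
      Nat.choose_zero_right, Nat.cast_one, one_smul]
    rw [Finset.sum_range_succ (fun j => ((n.choose (j + 1) : ℝ)) • T (j + 1)) n,
      Finset.sum_range_succ' (fun j => ((n.choose j : ℝ)) • T j) n]
    simp [Nat.choose_succ_self]
    abel

lemma alt_vanish (j m : ℕ) (h : j < m) :
    ∑ i ∈ Finset.Ico j (m + 1), (-1 : ℝ) ^ (i - j) * (i.choose j) * (m.choose i) = 0 := by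
  rw [Finset.sum_Ico_eq_sum_range]
  have hrw : ∀ t, (-1 : ℝ) ^ (j + t - j) * ((j + t).choose j) * (m.choose (j + t))
      = (m.choose j : ℝ) * ((-1 : ℝ) ^ t * ((m - j).choose t)) := by
    intro t
    have hsub : j + t - j = t := by omega
    rw [hsub]
    by_cases ht : j + t ≤ m
    · have hn := Nat.choose_mul (n := m) (k := j + t) (s := j) (Nat.le_add_right _ _)
      have hsub2 : j + t - j = t := by omega
      rw [hsub2] at hn
      have hc : ((m.choose (j + t) : ℝ)) * ((j + t).choose j)
          = ((m.choose j : ℝ)) * ((m - j).choose t) := by exact_mod_cast hn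
      linear_combination ((-1 : ℝ) ^ t) * hc
    · rw [Nat.choose_eq_zero_of_lt (by omega : m < j + t)]
      rw [Nat.choose_eq_zero_of_lt (by omega : m - j < t)]
      push_cast; ring
  rw [show m + 1 - j = (m - j) + 1 by omega]
  rw [Finset.sum_congr rfl fun t _ => hrw t, ← Finset.mul_sum]
  have : ∑ t ∈ Finset.range (m - j + 1), (-1 : ℝ) ^ t * ((m - j).choose t) = 0 := by
    have h0 : (m - j) ≠ 0 := by omega
    have := Int.alternating_sum_range_choose_of_ne (n := m - j) h0
    exact_mod_cast congrArg (fun z : ℤ => (z : ℝ)) this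
  rw [this, mul_zero]

lemma key_binom : ∀ (k j : ℕ), j < k →
    ∑ i ∈ Finset.Ico j k, (-1 : ℝ) ^ (i - j) * (i.choose j) * (k.choose (i + 1)) = 1 := by
  intro k
  induction k with
  | zero => intro j h; omega
  | succ k ih =>
    intro j h
    rcases Nat.lt_succ_iff_lt_or_eq.mp h with h' | rfl
    · have split : ∀ i ∈ Finset.Ico j (k + 1),
          (-1 : ℝ) ^ (i - j) * (i.choose j) * ((k + 1).choose (i + 1))
            = (-1 : ℝ) ^ (i - j) * (i.choose j) * (k.choose i)
              + (-1 : ℝ) ^ (i - j) * (i.choose j) * (k.choose (i + 1)) := by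
        intro i _
        rw [Nat.choose_succ_succ' k i]
        push_cast; ring
      rw [Finset.sum_congr rfl split, Finset.sum_add_distrib, alt_vanish j k h', zero_add,
        Finset.sum_Ico_succ_top (by omega : j ≤ k), Nat.choose_succ_self]
      rw [ih j h']
      simp
    · rw [show Finset.Ico j (j + 1) = {j} from Nat.Ico_succ_singleton j]
      simp

lemma sum_extend {M₀ : Type*} [AddCommMonoid M₀] (s t : Finset ℕ) (g : ℕ → M₀)
    (p : ℕ → Prop) [DecidablePred p] (hst : s ⊆ t) (h : ∀ x ∈ t, p x ↔ x ∈ s) :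
    ∑ x ∈ s, g x = ∑ x ∈ t, if p x then g x else 0 := by
  rw [← Finset.sum_subset hst (fun x hx hxs => if_neg (fun hpx => hxs ((h x hx).mp hpx)))]
  exact Finset.sum_congr rfl fun x hx => (if_pos ((h x (hst hx)).mpr hx)).symm

/-- Equality of the two forms of the continuous homotopy integrand:
`Σ_{i=0}^{M−1} D_x^i (X₀ · L⁽ⁱ⁺¹⁾ f) = Σ_{i=0}^{M−1} Xᵢ · Σ_{k=i+1}^{M} (−D_x)^{k−i−1} (∂f/∂X_k)`. -/
theorem integrand_forms_equal (M : ℕ) (f : MvPolynomial ℕ ℝ)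
    (hM : ∀ i ∈ f.vars, i ≤ M) :
    ∑ i ∈ Finset.range M, (Dx^[i]) (X 0 * higherEuler M (i + 1) f)
      = ∑ i ∈ Finset.range M,
          X i * ∑ k ∈ Finset.Icc (i + 1) M,
            ((fun g => -Dx g)^[k - (i + 1)]) (pderiv k f) := by
  have hrect_L : ∀ i ∈ Finset.range M,
      (Dx^[i]) (X 0 * higherEuler M (i + 1) f)
        = ∑ j ∈ Finset.range M, ∑ k ∈ Finset.range (M + 1),
            (if j ≤ i ∧ i < k then
              ((i.choose j : ℝ) * ((k.choose (i + 1) : ℝ) * (-1 : ℝ) ^ (k - i - 1))) else 0)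
              • (X j * (E ^ (k - j - 1)) (pderiv k f)) := by
    intro i hi
    have hiM : i < M := Finset.mem_range.mp hi
    rw [Dx_iter, E_pow_X0_mul]
    have stepA : ∀ j ∈ Finset.range (i + 1),
        (i.choose j : ℝ) • (X j * (E ^ (i - j)) (higherEuler M (i + 1) f))
          = ∑ k ∈ Finset.Icc (i + 1) M,
              ((i.choose j : ℝ) * ((k.choose (i + 1) : ℝ) * (-1 : ℝ) ^ (k - i - 1)))
                • (X j * (E ^ (k - j - 1)) (pderiv k f)) := by
      intro j hjmem
      have hji : j ≤ i := Nat.lt_succ_iff.mp (Finset.mem_range.mp hjmem)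
      unfold higherEuler
      rw [map_sum, Finset.mul_sum, Finset.smul_sum]
      refine Finset.sum_congr rfl fun k hk => ?_
      obtain ⟨hik, hkM⟩ := Finset.mem_Icc.mp hk
      rw [negDx_iter, map_smul, map_smul, ← Module.End.mul_apply, ← pow_add,
        show (i - j) + (k - (i + 1)) = k - j - 1 by omega,
        show k - (i + 1) = k - i - 1 by omega,
        mul_smul_comm, mul_smul_comm, smul_smul, smul_smul]
      ring_nf
    rw [Finset.sum_congr rfl stepA]
    simp only [ite_smul, zero_smul]
    have inner : ∀ j, ∑ k ∈ Finset.Icc (i + 1) M,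
        ((i.choose j : ℝ) * ((k.choose (i + 1) : ℝ) * (-1 : ℝ) ^ (k - i - 1)))
          • (X j * (E ^ (k - j - 1)) (pderiv k f))
        = ∑ k ∈ Finset.range (M + 1), if i < k then
            ((i.choose j : ℝ) * ((k.choose (i + 1) : ℝ) * (-1 : ℝ) ^ (k - i - 1)))
              • (X j * (E ^ (k - j - 1)) (pderiv k f)) else 0 := by
      intro j
      exact sum_extend _ _ _ (fun k => i < k)
        (by intro x hx; simp at hx ⊢ <;> omega)
        (by intro x hx; simp at hx ⊢ <;> omega)
    rw [Finset.sum_congr rfl fun j _ => inner j,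
      sum_extend (Finset.range (i + 1)) (Finset.range M) _ (fun j => j ≤ i)
        (by intro x hx; simp at hx ⊢ <;> omega)
        (by intro x hx; simp at hx ⊢ <;> omega)]
    refine Finset.sum_congr rfl fun j hj => ?_
    by_cases hij : j ≤ i
    · simp only [if_pos hij]
      refine Finset.sum_congr rfl fun k hk => ?_
      by_cases hik : i < k
      · simp [hij, hik]
      · simp [hik]
    · simp [hij]
  have hrect_R : ∀ j ∈ Finset.range M,
      X j * ∑ k ∈ Finset.Icc (j + 1) M, ((fun g => -Dx g)^[k - (j + 1)]) (pderiv k f)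
        = ∑ k ∈ Finset.range (M + 1),
            (if j < k then ((-1 : ℝ) ^ (k - j - 1)) else 0)
              • (X j * (E ^ (k - j - 1)) (pderiv k f)) := by
    intro j hj
    rw [Finset.mul_sum]
    have step : ∀ k ∈ Finset.Icc (j + 1) M,
        X j * ((fun g => -Dx g)^[k - (j + 1)]) (pderiv k f)
          = ((-1 : ℝ) ^ (k - j - 1)) • (X j * (E ^ (k - j - 1)) (pderiv k f)) := by
      intro k hk
      obtain ⟨hjk, hkM⟩ := Finset.mem_Icc.mp hk
      rw [negDx_iter, show k - (j + 1) = k - j - 1 by omega, mul_smul_comm]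
    rw [Finset.sum_congr rfl step]
    simp only [ite_smul, zero_smul]
    exact sum_extend (Finset.Icc (j + 1) M) (Finset.range (M + 1)) _ (fun k => j < k)
      (by intro x hx; simp at hx ⊢ <;> omega)
      (by intro x hx; simp at hx ⊢ <;> omega)
  rw [Finset.sum_congr rfl hrect_L, Finset.sum_congr rfl hrect_R, Finset.sum_comm]
  refine Finset.sum_congr rfl fun j hj => ?_
  have hjM : j < M := Finset.mem_range.mp hj
  rw [Finset.sum_comm]
  refine Finset.sum_congr rfl fun k hk => ?_
  have hkM : k ≤ M := Nat.lt_succ_iff.mp (Finset.mem_range.mp hk)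
  rw [← Finset.sum_smul]
  congr 1
  by_cases hjk : j < k
  · rw [if_pos hjk,
      ← sum_extend (Finset.Ico j k) (Finset.range M) _ (fun i => j ≤ i ∧ i < k)
        (by intro x hx; simp at hx ⊢ <;> omega)
        (by intro x hx; simp at hx ⊢ <;> omega)]
    have step : ∀ i ∈ Finset.Ico j k,
        ((i.choose j : ℝ) * ((k.choose (i + 1) : ℝ) * (-1 : ℝ) ^ (k - i - 1)))
          = ((-1 : ℝ) ^ (k - j - 1)) * ((-1 : ℝ) ^ (i - j) * (i.choose j) * (k.choose (i + 1))) := by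
      intro i hi
      obtain ⟨hji, hik⟩ := Finset.mem_Ico.mp hi
      have h1 : (i - j) + (k - i - 1) = k - j - 1 := by omega
      have h2 : (-1 : ℝ) ^ (i - j) * (-1 : ℝ) ^ (i - j) = 1 := by
        rw [← pow_add]
        exact Even.neg_one_pow ⟨i - j, rfl⟩
      rw [← h1, pow_add]
      linear_combination (-((-1 : ℝ) ^ (k - i - 1)) * (i.choose j) * (k.choose (i + 1))) * h2
    rw [Finset.sum_congr rfl step, ← Finset.mul_sum, key_binom k j hjk, mul_one]
  · rw [if_neg hjk]
    refine Finset.sum_eq_zero fun i _ => ?_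
    rw [if_neg (by omega)]
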